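/- Suppose ⟨φ⁰,...,φᵏ⟩ is a certificate for property ξ, and for each l from k down to 1, ψˡ is chosen so that ψᵏ is a Craig interpolant between φᵏ and ξ, and, for l < k, ψˡ is an interpolant between the image condition implied by φˡ and ψ^{l+1}. Then ⟨φ⁰, ψ¹, ..., ψᵏ⟩ is again a valid certificate for ξ, and each ψˡ is implied by φˡ (i.e., the new certificate is a relaxation of the old one). -/
import Mathlib


/-- The relaxed certificate ⟨φ⁰, ψ¹, ..., ψᵏ⟩: precondition kept, later layers relaxed. -/
def relaxedCert (n : ℕ → ℕ) (φ ψ : ∀ l, (Fin (n l) → ℝ) → Prop) :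
    ∀ l, (Fin (n l) → ℝ) → Prop
  | 0 => φ 0
  | l + 1 => ψ (l + 1)

/-- Certificate relaxation via Craig interpolation: replacing `φ¹,...,φᵏ` by
interpolants `ψ¹,...,ψᵏ` yields again a valid certificate for `ξ`, and the new
certificate is a relaxation of (implied by) the old one. -/
theorem certificate_relaxation
    (n : ℕ → ℕ) (k : ℕ) (hk : 1 ≤ k)
    (f : ∀ l, (Fin (n l) → ℝ) → (Fin (n (l+1)) → ℝ))
    (φ ψ : ∀ l, (Fin (n l) → ℝ) → Prop)
    (ξ : (Fin (n k) → ℝ) → Prop)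
    -- ⟨φ⁰,...,φᵏ⟩ is a certificate for ξ
    (hstep : ∀ l, l < k → ∀ x : Fin (n l) → ℝ, φ l x → φ (l+1) (f l x))
    (hpost : ∀ y : Fin (n k) → ℝ, φ k y → ξ y)
    -- ψᵏ is a Craig interpolant between φᵏ and ξ
    (hψk₁ : ∀ y : Fin (n k) → ℝ, φ k y → ψ k y)
    (hψk₂ : ∀ y : Fin (n k) → ℝ, ψ k y → ξ y)
    -- for 1 ≤ l < k, ψˡ interpolates: it is implied by φˡ and its image under fˡ implies ψ^{l+1}
    (hψ₁ : ∀ l, 1 ≤ l → l < k → ∀ x : Fin (n l) → ℝ, φ l x → ψ l x)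
    (hψ₂ : ∀ l, 1 ≤ l → l < k → ∀ x : Fin (n l) → ℝ, ψ l x → ψ (l+1) (f l x)) :
    -- ⟨φ⁰, ψ¹, ..., ψᵏ⟩ is again a valid certificate for ξ ...
    (∀ l, l < k → ∀ x : Fin (n l) → ℝ,
        relaxedCert n φ ψ l x → relaxedCert n φ ψ (l+1) (f l x)) ∧
    (∀ y : Fin (n k) → ℝ, relaxedCert n φ ψ k y → ξ y) ∧
    -- ... and each layer of the new certificate is implied by the old one
    (∀ l, l ≤ k → ∀ x : Fin (n l) → ℝ, φ l x → relaxedCert n φ ψ l x) := by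
  have himp : ∀ l, 1 ≤ l → l ≤ k → ∀ x : Fin (n l) → ℝ, φ l x → ψ l x := by
    intro l h1 hlk x hx
    rcases eq_or_lt_of_le hlk with h | h
    · subst h; exact hψk₁ x hx
    · exact hψ₁ l h1 h x hx
  refine ⟨?_, ?_, ?_⟩
  · intro l hl x hx
    match l with
    | 0 =>
      show ψ 1 (f 0 x)
      exact himp 1 le_rfl hl (f 0 x) (hstep 0 hl x hx)
    | l + 1 =>
      show ψ (l + 2) (f (l+1) x)
      exact hψ₂ (l+1) (Nat.succ_le_succ (Nat.zero_le l)) hl x hx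
  · intro y hy
    match k, hk with
    | k + 1, _ => exact hψk₂ y hy
  · intro l hl x hx
    match l with
    | 0 => exact hx
    | l + 1 => exact himp (l+1) (Nat.succ_le_succ (Nat.zero_le l)) hl x hx
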